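/- Let ϱ₋, ϱ₊, ϱ_{M−}, ϱ_{M+}, p₋, p₊ be positive reals, v₋, v₊ ∈ ℝ, and ε > 0 be such that A(ε) ≠ 0, B(ε) ≥ 0, ϱ_{M−} + ε − ϱ₋ > 0 and ϱ_{M+} − ε − ϱ₊ > 0. Define μ₀(ε) = (1/A(ε))·[D(ε) + ϱ₋ϱ₊(ϱ_{M+}−ε)(v₋ − v₊) − √((ϱ_{M−}+ε)²·((ϱ_{M+}−ε−ϱ₊)/(ϱ_{M−}+ε−ϱ₋))·B(ε))], μ₁(ε) = (1/A(ε))·[D(ε) − √((ϱ_{M−}+ε−ϱ₋)(ϱ_{M+}−ε−ϱ₊)·B(ε))], and μ₂(ε) = (1/A(ε))·[D(ε) + ϱ₋ϱ₊(ϱ_{M−}+ε)(v₋ − v₊) − √((ϱ_{M+}−ε)²·((ϱ_{M−}+ε−ϱ₋)/(ϱ_{M+}−ε−ϱ₊))·B(ε))]. Then μ₀(ε) = v₋ + ((ϱ_{M−}+ε)/(ϱ_{M−}+ε−ϱ₋))·(μ₁(ε) − v₋) and μ₂(ε) = v₊ + ((ϱ_{M+}−ε)/(ϱ_{M+}−ε−ϱ₊))·(μ₁(ε)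 − v₊). -/
import Mathlib


noncomputable section

/-- `A(ε) = ϱ₋(ϱ_{M−}+ε)(ϱ_{M+}−ε−ϱ₊) − ϱ₊(ϱ_{M+}−ε)(ϱ_{M−}+ε−ϱ₋)`. -/
def Aeps (ϱm ϱp ϱMm ϱMp ε : ℝ) : ℝ :=
  ϱm * (ϱMm + ε) * (ϱMp - ε - ϱp) - ϱp * (ϱMp - ε) * (ϱMm + ε - ϱm)

/-- `B(ε) = ϱ₋ϱ₊(ϱ_{M−}+ε)(ϱ_{M+}−ε)(v₋−v₊)² − (p₋−p₊)A(ε)`. -/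
def Beps (ϱm ϱp ϱMm ϱMp pm pp vm vp ε : ℝ) : ℝ :=
  ϱm * ϱp * (ϱMm + ε) * (ϱMp - ε) * (vm - vp) ^ 2 -
    (pm - pp) * Aeps ϱm ϱp ϱMm ϱMp ε

/-- `D(ε) = v₋ϱ₋(ϱ_{M−}+ε)(ϱ_{M+}−ε−ϱ₊) − v₊ϱ₊(ϱ_{M+}−ε)(ϱ_{M−}+ε−ϱ₋)`. -/
def Deps (ϱm ϱp ϱMm ϱMp vm vp ε : ℝ) : ℝ :=
  vm * ϱm * (ϱMm + ε) * (ϱMp - ε - ϱp) - vp * ϱp * (ϱMp - ε) * (ϱMm + ε - ϱm)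

/-- The perturbed speed `μ₀(ε)` of the left interface. -/
def mu0eps (ϱm ϱp ϱMm ϱMp pm pp vm vp ε : ℝ) : ℝ :=
  (1 / Aeps ϱm ϱp ϱMm ϱMp ε) *
    (Deps ϱm ϱp ϱMm ϱMp vm vp ε + ϱm * ϱp * (ϱMp - ε) * (vm - vp) -
      Real.sqrt ((ϱMm + ε) ^ 2 * ((ϱMp - ε - ϱp) / (ϱMm + ε - ϱm)) *
        Beps ϱm ϱp ϱMm ϱMp pm pp vm vp ε))

/-- The perturbed speed `μ₁(ε)` of the middle interface. -/
def mu1eps (ϱm ϱp ϱMm ϱMp pm pp vm vp ε : ℝ) : ℝ :=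
  (1 / Aeps ϱm ϱp ϱMm ϱMp ε) *
    (Deps ϱm ϱp ϱMm ϱMp vm vp ε -
      Real.sqrt ((ϱMm + ε - ϱm) * (ϱMp - ε - ϱp) *
        Beps ϱm ϱp ϱMm ϱMp pm pp vm vp ε))

/-- The perturbed speed `μ₂(ε)` of the right interface. -/
def mu2eps (ϱm ϱp ϱMm ϱMp pm pp vm vp ε : ℝ) : ℝ :=
  (1 / Aeps ϱm ϱp ϱMm ϱMp ε) *
    (Deps ϱm ϱp ϱMm ϱMp vm vp ε + ϱm * ϱp * (ϱMm + ε) * (vm - vp) -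
      Real.sqrt ((ϱMp - ε) ^ 2 * ((ϱMm + ε - ϱm) / (ϱMp - ε - ϱp)) *
        Beps ϱm ϱp ϱMm ϱMp pm pp vm vp ε))


private lemma mu_helper (A D S X c v : ℝ) (hAinv : A * (1 / A) = 1)
    (hkey : D + X - v * A = c * (D - v * A)) :
    (1 / A) * (D + X - c * S) = v + c * ((1 / A) * (D - S) - v) := by
  linear_combination (1 / A) * hkey + v * (1 - c) * hAinv

/-- **Lemma (relations between the perturbed interface speeds).** -/
theorem perturbed_speeds_relations
    (ϱm ϱp ϱMm ϱMp pm pp vm vp ε : ℝ)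
    (hϱm : 0 < ϱm) (hϱp : 0 < ϱp) (hMm : 0 < ϱMm) (hMp : 0 < ϱMp)
    (hpm : 0 < pm) (hpp : 0 < pp) (hε : 0 < ε)
    (hA : Aeps ϱm ϱp ϱMm ϱMp ε ≠ 0)
    (hB : 0 ≤ Beps ϱm ϱp ϱMm ϱMp pm pp vm vp ε)
    (hm : 0 < ϱMm + ε - ϱm) (hp : 0 < ϱMp - ε - ϱp) :
    mu0eps ϱm ϱp ϱMm ϱMp pm pp vm vp ε =
      vm + ((ϱMm + ε) / (ϱMm + ε - ϱm)) *
        (mu1eps ϱm ϱp ϱMm ϱMp pm pp vm vp ε - vm) ∧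
    mu2eps ϱm ϱp ϱMm ϱMp pm pp vm vp ε =
      vp + ((ϱMp - ε) / (ϱMp - ε - ϱp)) *
        (mu1eps ϱm ϱp ϱMm ϱMp pm pp vm vp ε - vp) := by
  have hm0 : ϱMm + ε - ϱm ≠ 0 := ne_of_gt hm
  have hp0 : ϱMp - ε - ϱp ≠ 0 := ne_of_gt hp
  have hMmpos : 0 < ϱMm + ε := by linarith
  have hMppos : 0 < ϱMp - ε := by linarith
  set A := Aeps ϱm ϱp ϱMm ϱMp ε with hAdef
  set B := Beps ϱm ϱp ϱMm ϱMp pm pp vm vp ε with hBdef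
  set D := Deps ϱm ϱp ϱMm ϱMp vm vp ε with hDdef
  set S := Real.sqrt ((ϱMm + ε - ϱm) * (ϱMp - ε - ϱp) * B) with hSdef
  have hAinv : A * (1 / A) = 1 := by field_simp
  have h0 : Real.sqrt ((ϱMm + ε) ^ 2 * ((ϱMp - ε - ϱp) / (ϱMm + ε - ϱm)) * B)
      = ((ϱMm + ε) / (ϱMm + ε - ϱm)) * S := by
    have harg : (ϱMm + ε) ^ 2 * ((ϱMp - ε - ϱp) / (ϱMm + ε - ϱm)) * B
        = ((ϱMm + ε) / (ϱMm + ε - ϱm)) ^ 2 * ((ϱMm + ε - ϱm) * (ϱMp - ε - ϱp) * B) := by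
      field_simp
    rw [harg, hSdef, Real.sqrt_mul (sq_nonneg _), Real.sqrt_sq (by positivity)]
  have h2 : Real.sqrt ((ϱMp - ε) ^ 2 * ((ϱMm + ε - ϱm) / (ϱMp - ε - ϱp)) * B)
      = ((ϱMp - ε) / (ϱMp - ε - ϱp)) * S := by
    have harg : (ϱMp - ε) ^ 2 * ((ϱMm + ε - ϱm) / (ϱMp - ε - ϱp)) * B
        = ((ϱMp - ε) / (ϱMp - ε - ϱp)) ^ 2 * ((ϱMm + ε - ϱm) * (ϱMp - ε - ϱp) * B) := by
      field_simp
    rw [harg, hSdef, Real.sqrt_mul (sq_nonneg _), Real.sqrt_sq (by positivity)]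
  have key1 : D + ϱm * ϱp * (ϱMp - ε) * (vm - vp) - vm * A
      = ((ϱMm + ε) / (ϱMm + ε - ϱm)) * (D - vm * A) := by
    rw [hAdef, hDdef]
    simp only [Aeps, Deps]
    field_simp
    ring
  have key2 : D + ϱm * ϱp * (ϱMm + ε) * (vm - vp) - vp * A
      = ((ϱMp - ε) / (ϱMp - ε - ϱp)) * (D - vp * A) := by
    rw [hAdef, hDdef]
    simp only [Aeps, Deps]
    field_simp
    ring
  constructor
  · rw [mu0eps, mu1eps, ← hAdef, ← hBdef, ← hDdef, ← hSdef, h0]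
    exact mu_helper A D S _ _ vm hAinv key1
  · rw [mu2eps, mu1eps, ← hAdef, ← hBdef, ← hDdef, ← hSdef, h2]
    exact mu_helper A D S _ _ vp hAinv key2
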